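/- Let g be a symmetric (0,2)-tensor field on ℝ×(0,∞)×(0,2π)×(0,π) with coordinates (t,r,φ,ϑ), satisfying the Killing equations for the three rotation generators ξ = ∂/∂φ, ζ = −sin φ ∂/∂ϑ − cot ϑ cos φ ∂/∂φ, λ = cos φ ∂/∂ϑ − cot ϑ sin φ ∂/∂φ (acting only in the (φ,ϑ) variables). Then g_{tφ} = g_{tϑ} = g_{rφ} = g_{rϑ} = g_{φϑ} = 0, the components g_{tt}, g_{tr}, g_{rr} depend only on (t,r), and there is a function Q(t,r) with g_{ϑϑ} = Q and g_{φφ} = Q sin²ϑ. -/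

import Mathlib

open scoped BigOperators

/-- Partial derivative of a real function on `ℝ⁴` in the `j`-th coordinate direction. -/
noncomputable def pd (f : (Fin 4 → ℝ) → ℝ) (j : Fin 4) (x : Fin 4 → ℝ) : ℝ :=
  fderiv ℝ f x (Pi.single j 1)

/-- The domain `ℝ × (0,∞) × (0,2π) × (0,π)` in `(t, r, φ, ϑ)`-space. -/
def sphDom4 : Set (Fin 4 → ℝ) :=
  {p | 0 < p 1 ∧ p 2 ∈ Set.Ioo 0 (2 * Real.pi) ∧ p 3 ∈ Set.Ioo 0 Real.pi}

/-- The Killing equation for a vector field `ξ` and a `(0,2)`-tensor `G` on `sphDom4`. -/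
def KillingEq4 (G : (Fin 4 → ℝ) → Matrix (Fin 4) (Fin 4) ℝ)
    (ξ : (Fin 4 → ℝ) → (Fin 4 → ℝ)) : Prop :=
  ∀ p ∈ sphDom4, ∀ k l : Fin 4,
    (∑ m, pd (fun q => G q k l) m p * ξ p m)
      + (∑ i, G p i l * pd (fun q => ξ q i) k p)
      + (∑ j, G p k j * pd (fun q => ξ q j) l p) = 0

/-!
The Killing equation of `∂_φ` says that `g` does not depend on `φ`. Granted that, the
combinations `cos φ · (ζ-equation) + sin φ · (λ-equation)` and `-sin φ · (ζ-equation) +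
cos φ · (λ-equation)` contain no derivatives of `g` beyond `∂_ϑ`: the first is purely algebraic
and kills `g_{tφ}, g_{tϑ}, g_{rφ}, g_{rϑ}, g_{φϑ}` and gives `g_{φφ} = sin²ϑ g_{ϑϑ}`; the second
reads `∂_ϑ g_{kl} = cot ϑ (g_{φl} δ_{kφ} + g_{kφ} δ_{lφ})`, so `g_{tt}, g_{tr}, g_{rr}, g_{ϑϑ}`
do not depend on `ϑ` either. The domain is convex, hence these four components are functions
of `(t, r)` alone.
-/

open Real

@[simp] lemma pd_const (c : ℝ) (j : Fin 4) (p : Fin 4 → ℝ) : pd (fun _ => c) j p = 0 := by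
  simp [pd]

lemma hasFDerivAt_comp_apply {f : ℝ → ℝ} {f' : ℝ} {p : Fin 4 → ℝ} {i : Fin 4}
    (hf : HasDerivAt f f' (p i)) :
    HasFDerivAt (fun q : Fin 4 → ℝ => f (q i))
      (f' • ContinuousLinearMap.proj (R := ℝ) (φ := fun _ : Fin 4 => ℝ) i) p :=
  hf.comp_hasFDerivAt p (hasFDerivAt_apply (𝕜 := ℝ) (F' := fun _ => ℝ) i p)

lemma pd_comp_of_hasDerivAt {f : ℝ → ℝ} {f' : ℝ} {p : Fin 4 → ℝ} {i : Fin 4}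
    (hf : HasDerivAt f f' (p i)) (j : Fin 4) :
    pd (fun q => f (q i)) j p = f' * (Pi.single j 1 : Fin 4 → ℝ) i := by
  simp [pd, (hasFDerivAt_comp_apply hf).fderiv]

lemma pd_mul_comp_of_hasDerivAt {f g : ℝ → ℝ} {f' g' : ℝ} {p : Fin 4 → ℝ} {i k : Fin 4}
    (hf : HasDerivAt f f' (p i)) (hg : HasDerivAt g g' (p k)) (j : Fin 4) :
    pd (fun q => f (q i) * g (q k)) j p
      = f' * g (p k) * (Pi.single j 1 : Fin 4 → ℝ) i
        + f (p i) * g' * (Pi.single j 1 : Fin 4 → ℝ) k := by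
  have h : HasFDerivAt (fun q : Fin 4 → ℝ => f (q i) * g (q k)) _ p :=
    (hasFDerivAt_comp_apply hf).mul (hasFDerivAt_comp_apply hg)
  simp [pd, h.fderiv]
  ring

lemma hasDerivAt_neg_cos_div_sin {x : ℝ} (hx : sin x ≠ 0) :
    HasDerivAt (fun y => -(cos y / sin y)) (1 / sin x ^ 2) x := by
  refine ((hasDerivAt_cos x).div (hasDerivAt_sin x) hx).neg.congr_deriv ?_
  field_simp
  linear_combination sin_sq_add_cos_sq x

lemma sin_ne_zero_of_mem_sphDom4 {p : Fin 4 → ℝ} (hp : p ∈ sphDom4) : sin (p 3) ≠ 0 :=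
  (sin_pos_of_pos_of_lt_pi hp.2.2.1 hp.2.2.2).ne'

noncomputable def rotZeta (p : Fin 4 → ℝ) : Fin 4 → ℝ :=
  ![0, 0, -(cos (p 3) / sin (p 3)) * cos (p 2), -sin (p 2)]

noncomputable def rotLambda (p : Fin 4 → ℝ) : Fin 4 → ℝ :=
  ![0, 0, -(cos (p 3) / sin (p 3)) * sin (p 2), cos (p 2)]

section Killing

variable {G : (Fin 4 → ℝ) → Matrix (Fin 4) (Fin 4) ℝ} {p : Fin 4 → ℝ}

lemma KillingEq4.angular_apply {a b : (Fin 4 → ℝ) → ℝ}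
    (h : KillingEq4 G fun q => ![0, 0, a q, b q]) (hp : p ∈ sphDom4) (k l : Fin 4) :
    pd (fun q => G q k l) 2 p * a p + pd (fun q => G q k l) 3 p * b p
      + (G p 2 l * pd a k p + G p 3 l * pd b k p)
      + (G p k 2 * pd a l p + G p k 3 * pd b l p) = 0 := by
  simpa [Fin.sum_univ_four] using h p hp k l

lemma pd_phi_eq_zero_of_killing (hξ : KillingEq4 G fun _ => ![0, 0, 1, 0]) (hp : p ∈ sphDom4)
    (k l : Fin 4) : pd (fun q => G q k l) 2 p = 0 := by
  simpa using hξ.angular_apply hp k l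

-- `cos φ ζ + sin φ λ = -cot ϑ ∂_φ` and `-sin φ ζ + cos φ λ = ∂_ϑ`.
theorem killing_rotation_combinations (hζ : KillingEq4 G rotZeta)
    (hlam : KillingEq4 G rotLambda) (hp : p ∈ sphDom4)
    (hφ : ∀ k l, pd (fun q => G q k l) 2 p = 0) (k l : Fin 4) :
    G p 2 l * (Pi.single k 1 : Fin 4 → ℝ) 3 / sin (p 3) ^ 2
        - G p 3 l * (Pi.single k 1 : Fin 4 → ℝ) 2
        + G p k 2 * (Pi.single l 1 : Fin 4 → ℝ) 3 / sin (p 3) ^ 2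
        - G p k 3 * (Pi.single l 1 : Fin 4 → ℝ) 2 = 0 ∧
      pd (fun q => G q k l) 3 p = cos (p 3) / sin (p 3) *
        (G p 2 l * (Pi.single k 1 : Fin 4 → ℝ) 2 + G p k 2 * (Pi.single l 1 : Fin 4 → ℝ) 2) := by
  have hS := sin_ne_zero_of_mem_sphDom4 hp
  have hZ := hζ.angular_apply hp k l
  have hΛ := hlam.angular_apply hp k l
  simp only [hφ, pd_mul_comp_of_hasDerivAt (hasDerivAt_neg_cos_div_sin hS) (hasDerivAt_cos _),
    pd_mul_comp_of_hasDerivAt (hasDerivAt_neg_cos_div_sin hS) (hasDerivAt_sin _),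
    pd_comp_of_hasDerivAt (hasDerivAt_sin _).fun_neg, pd_comp_of_hasDerivAt (hasDerivAt_cos _)]
    at hZ hΛ
  have h1 := sin_sq_add_cos_sq (p 2)
  constructor
  · linear_combination cos (p 2) * hZ + sin (p 2) * hΛ
      - (G p 2 l * (Pi.single k 1 : Fin 4 → ℝ) 3 / sin (p 3) ^ 2
        - G p 3 l * (Pi.single k 1 : Fin 4 → ℝ) 2
        + G p k 2 * (Pi.single l 1 : Fin 4 → ℝ) 3 / sin (p 3) ^ 2
        - G p k 3 * (Pi.single l 1 : Fin 4 → ℝ) 2) * h1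
  · linear_combination -sin (p 2) * hZ + cos (p 2) * hΛ
      - (pd (fun q => G q k l) 3 p - cos (p 3) / sin (p 3) *
        (G p 2 l * (Pi.single k 1 : Fin 4 → ℝ) 2 + G p k 2 * (Pi.single l 1 : Fin 4 → ℝ) 2)) * h1

theorem pd_theta_eq_zero_of_killing (hξ : KillingEq4 G fun _ => ![0, 0, 1, 0])
    (hζ : KillingEq4 G rotZeta) (hlam : KillingEq4 G rotLambda) (hp : p ∈ sphDom4)
    {k l : Fin 4} (hk : k ≠ 2) (hl : l ≠ 2) : pd (fun q => G q k l) 3 p = 0 := by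
  rw [(killing_rotation_combinations hζ hlam hp (pd_phi_eq_zero_of_killing hξ hp) k l).2]
  simp [hk, hl]

theorem angular_components_of_killing (hξ : KillingEq4 G fun _ => ![0, 0, 1, 0])
    (hζ : KillingEq4 G rotZeta) (hlam : KillingEq4 G rotLambda)
    (hsymm : G p 2 3 = G p 3 2) (hp : p ∈ sphDom4) :
    G p 0 2 = 0 ∧ G p 0 3 = 0 ∧ G p 1 2 = 0 ∧ G p 1 3 = 0 ∧ G p 2 3 = 0 ∧
      G p 2 2 = G p 3 3 * sin (p 3) ^ 2 := by
  have hS := sin_ne_zero_of_mem_sphDom4 hp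
  have hA k l :=
    (killing_rotation_combinations hζ hlam hp (pd_phi_eq_zero_of_killing hξ hp) k l).1
  have h03 := hA 0 3
  have h02 := hA 0 2
  have h13 := hA 1 3
  have h12 := hA 1 2
  have h33 := hA 3 3
  have h23 := hA 2 3
  simp [hS] at h03 h02 h13 h12 h33 h23
  rw [← hsymm] at h33
  field_simp at h33 h23
  exact ⟨h03, h02, h13, h12, by linarith, by linarith⟩

end Killing

theorem Convex.eq_of_fderiv_apply_sub_eq_zero {E F : Type*} [NormedAddCommGroup E]
    [NormedSpace ℝ E] [NormedAddCommGroup F] [NormedSpace ℝ F] {s : Set E} (hs : Convex ℝ s)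
    {f : E → F} (hf : ∀ z ∈ s, DifferentiableAt ℝ f z) {x y : E} (hx : x ∈ s) (hy : y ∈ s)
    (h : ∀ z ∈ s, fderiv ℝ f z (y - x) = 0) : f y = f x := by
  have hmem : ∀ t ∈ Set.Icc (0 : ℝ) 1, x + t • (y - x) ∈ s :=
    fun t ht => hs.add_smul_sub_mem hx hy ht
  have hderiv : ∀ t ∈ Set.Icc (0 : ℝ) 1, HasDerivAt (fun t : ℝ => f (x + t • (y - x))) 0 t := by
    intro t ht
    have hline : HasDerivAt (fun t : ℝ => x + t • (y - x)) (y - x) t := by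
      simpa using ((hasDerivAt_id t).smul_const (y - x)).const_add x
    simpa [Function.comp_def, h _ (hmem t ht)] using
      (hf _ (hmem t ht)).hasFDerivAt.comp_hasDerivAt t hline
  have := constant_of_has_deriv_right_zero
    (fun t ht => (hderiv t ht).continuousAt.continuousWithinAt)
    (fun t ht => (hderiv t (Set.Ico_subset_Icc_self ht)).hasDerivWithinAt) 1
    (Set.right_mem_Icc.2 zero_le_one)
  simpa using this

theorem convex_sphDom4 : Convex ℝ sphDom4 :=
  ((convex_Ioi 0).linear_preimage (LinearMap.proj 1)).inter
    (((convex_Ioo _ _).linear_preimage (LinearMap.proj 2)).inter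
      ((convex_Ioo _ _).linear_preimage (LinearMap.proj 3)))

theorem eq_of_pd_phi_theta_eq_zero {f : (Fin 4 → ℝ) → ℝ}
    (hf : ∀ z ∈ sphDom4, DifferentiableAt ℝ f z)
    (hφ : ∀ z ∈ sphDom4, pd f 2 z = 0) (hθ : ∀ z ∈ sphDom4, pd f 3 z = 0)
    {p q : Fin 4 → ℝ} (hp : p ∈ sphDom4) (hq : q ∈ sphDom4) (h0 : q 0 = p 0) (h1 : q 1 = p 1) :
    f q = f p := by
  have hqp : q - p = (q 2 - p 2) • Pi.single 2 1 + (q 3 - p 3) • Pi.single 3 1 := by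
    ext j
    fin_cases j <;> simp [h0, h1]
  refine convex_sphDom4.eq_of_fderiv_apply_sub_eq_zero hf hp hq fun z hz => ?_
  rw [hqp, map_add, map_smul, map_smul, ← pd, ← pd, hφ z hz, hθ z hz, smul_zero, smul_zero,
    add_zero]

/-- a symmetric `(0,2)`-tensor field on `ℝ×(0,∞)×(0,2π)×(0,π)` (coordinates
`(t,r,φ,ϑ)`) satisfying the Killing equations for the three rotation generators
`ξ = ∂/∂φ`, `ζ = −sin φ ∂/∂ϑ − cot ϑ cos φ ∂/∂φ`, `λ = cos φ ∂/∂ϑ − cot ϑ sin φ ∂/∂φ`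
has `g_{tφ} = g_{tϑ} = g_{rφ} = g_{rϑ} = g_{φϑ} = 0`, `g_{tt}, g_{tr}, g_{rr}` functions
of `(t,r)` only, `g_{ϑϑ} = Q(t,r)`, and `g_{φφ} = Q(t,r) sin²ϑ`. -/
theorem rotation_invariant_tensor_form_4d
    (G : (Fin 4 → ℝ) → Matrix (Fin 4) (Fin 4) ℝ)
    (hsymm : ∀ p ∈ sphDom4, ∀ k l : Fin 4, G p k l = G p l k)
    (hdiff : ∀ k l, ∀ p ∈ sphDom4, DifferentiableAt ℝ (fun q => G q k l) p)
    (hξ : KillingEq4 G fun _ => ![0, 0, 1, 0])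
    (hζ : KillingEq4 G fun p =>
      ![0, 0, -(Real.cos (p 3) / Real.sin (p 3)) * Real.cos (p 2), -Real.sin (p 2)])
    (hlam : KillingEq4 G fun p =>
      ![0, 0, -(Real.cos (p 3) / Real.sin (p 3)) * Real.sin (p 2), Real.cos (p 2)]) :
    ∃ gtt gtr grr Q : ℝ → ℝ → ℝ, ∀ p ∈ sphDom4,
      G p 0 2 = 0 ∧ G p 0 3 = 0 ∧ G p 1 2 = 0 ∧ G p 1 3 = 0 ∧ G p 2 3 = 0 ∧
      G p 0 0 = gtt (p 0) (p 1) ∧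
      G p 0 1 = gtr (p 0) (p 1) ∧
      G p 1 1 = grr (p 0) (p 1) ∧
      G p 3 3 = Q (p 0) (p 1) ∧
      G p 2 2 = Q (p 0) (p 1) * Real.sin (p 3) ^ 2 := by
  let base : ℝ → ℝ → Fin 4 → ℝ := fun t r => ![t, r, π, π / 2]
  refine ⟨fun t r => G (base t r) 0 0, fun t r => G (base t r) 0 1, fun t r => G (base t r) 1 1,
    fun t r => G (base t r) 3 3, fun p hp => ?_⟩
  have hbase : base (p 0) (p 1) ∈ sphDom4 :=
    ⟨hp.1, ⟨pi_pos, show π < 2 * π by linarith [pi_pos]⟩, ⟨half_pos pi_pos, half_lt_self pi_pos⟩⟩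
  have radial {k l : Fin 4} (hk : k ≠ 2) (hl : l ≠ 2) : G p k l = G (base (p 0) (p 1)) k l :=
    eq_of_pd_phi_theta_eq_zero (hdiff k l) (fun z hz => pd_phi_eq_zero_of_killing hξ hz k l)
      (fun z hz => pd_theta_eq_zero_of_killing hξ hζ hlam hz hk hl) hbase hp rfl rfl
  obtain ⟨h02, h03, h12, h13, h23, h22⟩ :=
    angular_components_of_killing hξ hζ hlam (hsymm p hp 2 3) hp
  refine ⟨h02, h03, h12, h13, h23, radial (by decide) (by decide), radial (by decide) (by decide),
    radial (by decide) (by decide), radial (by decide) (by decide), ?_⟩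
  rw [h22, radial (by decide) (by decide)]
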